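/- arXiv:0903.0573 — 2 statements merged into one kernel-verified Lean document; each statement's English description precedes it below -/
import Mathlib

section
/- Let $\lambda>0$. If $\psi\in L^1([0,\infty))$ satisfies $\int_0^\infty s^j\psi(s)ds=0$ for even $0\le j\le 2[\lambda]$ and $\int_1^\infty s^\beta|\psi(s)|ds<\infty$ for some $\beta>2\lambda$, then there exist $\rho>0$ and $C>0$ with $|B_{\lambda+1}\psi(u)|\le C\,\frac{u^{\lambda}}{(u+1)^{\lambda+\rho}}$ for all $u>0$. -/
open MeasureTheory Real

/-- The modified fractional integral `B_δ ψ`. -/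
noncomputable def fracB (δ : ℝ) (ψ : ℝ → ℝ) (u : ℝ) : ℝ :=
  (2 / Real.Gamma δ) * ∫ v in (0:ℝ)..(Real.sqrt u), ψ v * (u - v^2) ^ (δ - 1)

/-!
Write `B_{λ+1}ψ(u) = (2/Γ(λ+1)) ∫_{v ≥ 0} ψ(v) (u - v²)₊^λ dv`. Since `(u - v²)₊^λ ≤ u^λ`,
this is `O(u^λ)`. For the decay, let `P_u(v) = u^λ ∑_{k ≤ [λ]} binom(λ, k) (-v²/u)^k` be the
Taylor polynomial of `(u - v²)^λ` in `v²`. The vanishing even moments give `∫ ψ P_u = 0`, so `ψ`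
may be integrated against `(u - v²)₊^λ - P_u(v)` instead. By the binomial series this difference
is at most `C u^{λ-s} v^{2s}` for every `s ∈ [[λ], [λ] + 1]`; taking `λ < s ≤ β/2`, the `β`-moment
bound makes the integral `O(u^{λ-s})`. The two bounds together give the claim with `ρ = s - λ`.
-/

open Set

theorem fracB_add_one_eq {a : ℝ} (ha : 0 < a) (ψ : ℝ → ℝ) {u : ℝ} (hu : 0 ≤ u) :
    fracB (a + 1) ψ u = 2 / Gamma (a + 1) * ∫ v in Ici 0, ψ v * max (u - v ^ 2) 0 ^ a := by
  rw [fracB, add_sub_cancel_right, intervalIntegral.integral_of_le (sqrt_nonneg u),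
    ← integral_Icc_eq_integral_Ioc, setIntegral_eq_of_subset_of_forall_sdiff_eq_zero
      measurableSet_Ici Icc_subset_Ici_self]
  · refine congrArg _ (setIntegral_congr_fun measurableSet_Icc fun v hv => ?_)
    have : v ^ 2 ≤ u := (sq_le_sq₀ hv.1 (sqrt_nonneg u)).mpr hv.2 |>.trans_eq (sq_sqrt hu)
    rw [max_eq_left (by linarith)]
  · rintro v ⟨hv0, hv⟩
    have : u < v ^ 2 := lt_sq_of_sqrt_lt (lt_of_not_ge fun h => hv ⟨hv0, h⟩)
    rw [max_eq_right (by linarith), zero_rpow ha.ne', mul_zero]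

theorem abs_max_sub_sq_rpow_le {a u : ℝ} (ha : 0 ≤ a) (hu : 0 ≤ u) (v : ℝ) :
    |max (u - v ^ 2) 0 ^ a| ≤ u ^ a := by
  rw [abs_of_nonneg (by positivity)]
  gcongr
  exact max_le (by nlinarith [sq_nonneg v]) hu

theorem integrable_mul_max_sub_sq_rpow {μ : Measure ℝ} {ψ : ℝ → ℝ} (hψ : Integrable ψ μ)
    {a u : ℝ} (ha : 0 ≤ a) (hu : 0 ≤ u) :
    Integrable (fun v => ψ v * max (u - v ^ 2) 0 ^ a) μ := by
  have hcont : Continuous fun v : ℝ => max (u - v ^ 2) 0 ^ a :=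
    (by fun_prop : Continuous fun v : ℝ => max (u - v ^ 2) 0).rpow_const fun _ => Or.inr ha
  refine (hψ.norm.mul_const (u ^ a)).mono' (hψ.aestronglyMeasurable.mul
    hcont.aestronglyMeasurable) (Filter.Eventually.of_forall fun v => ?_)
  rw [norm_mul]
  exact mul_le_mul_of_nonneg_left (abs_max_sub_sq_rpow_le ha hu v) (norm_nonneg _)

theorem abs_integral_mul_max_sub_sq_rpow_le {μ : Measure ℝ} {ψ : ℝ → ℝ} (hψ : Integrable ψ μ)
    {a u : ℝ} (ha : 0 ≤ a) (hu : 0 ≤ u) :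
    |∫ v, ψ v * max (u - v ^ 2) 0 ^ a ∂μ| ≤ (∫ v, |ψ v| ∂μ) * u ^ a := by
  rw [← integral_mul_const (u ^ a)]
  refine norm_integral_le_of_norm_le (G := ℝ) (hψ.abs.mul_const _)
    (Filter.Eventually.of_forall fun v => ?_)
  rw [norm_mul]
  exact mul_le_mul_of_nonneg_left (abs_max_sub_sq_rpow_le ha hu v) (norm_nonneg _)

theorem abs_one_sub_rpow_sub_sum_choose_le (a : ℝ) (n : ℕ) :
    ∃ C, ∀ x ∈ Icc (0 : ℝ) (1 / 2),
      |(1 - x) ^ a - ∑ k ∈ Finset.range n, Ring.choose a k * (-x) ^ k| ≤ C * x ^ n := by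
  obtain ⟨q, -, C, -, hC⟩ := one_add_rpow_hasFPowerSeriesOnBall_zero (a := a)
    |>.uniform_geometric_approx' (r' := 3 / 4) (by rw [ENNReal.coe_lt_one_iff]; norm_num)
  refine ⟨C * (q / (3 / 4)) ^ n, fun x hx => ?_⟩
  have hball : -x ∈ Metric.ball (0 : ℝ) (3 / 4 : NNReal) := by
    rw [mem_ball_zero_iff, norm_neg, Real.norm_of_nonneg hx.1]
    norm_num; linarith [hx.2]
  have := hC (-x) hball n
  simp only [zero_add, FormalMultilinearSeries.partialSum, binomialSeries_apply, List.ofFn_const,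
    List.prod_replicate, smul_eq_mul, Real.norm_eq_abs, abs_neg, abs_of_nonneg hx.1,
    NNReal.coe_div, NNReal.coe_ofNat] at this
  rw [sub_eq_add_neg 1 x]
  convert this using 1
  ring

theorem pow_le_two_mul_rpow {x s : ℝ} {k : ℕ} (hx : 1 / 2 ≤ x) (hk : (k : ℝ) ≤ s) :
    x ^ k ≤ (2 * x) ^ s :=
  calc x ^ k ≤ (2 * x) ^ k := pow_le_pow_left₀ (by linarith) (by linarith) k
    _ = (2 * x) ^ (k : ℝ) := (rpow_natCast _ _).symm
    _ ≤ (2 * x) ^ s := rpow_le_rpow_of_exponent_le (by linarith) hk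

theorem abs_max_one_sub_rpow_sub_sum_choose_le {a s : ℝ} {m : ℕ} (ha : 0 ≤ a)
    (hms : (m : ℝ) ≤ s) (hsm : s ≤ m + 1) :
    ∃ C, ∀ x, 0 ≤ x →
      |max (1 - x) 0 ^ a - ∑ k ∈ Finset.range (m + 1), Ring.choose a k * (-x) ^ k| ≤ C * x ^ s := by
  obtain ⟨C₀, hC₀⟩ := abs_one_sub_rpow_sub_sum_choose_le a (m + 1)
  set D := ∑ k ∈ Finset.range (m + 1), |Ring.choose a k|
  have hs : 0 ≤ s := (Nat.cast_nonneg m).trans hms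
  refine ⟨max C₀ 0 + 2 ^ s * (1 + D), fun x hx => ?_⟩
  rcases le_or_gt x (1 / 2) with hx2 | hx2
  · have hpow : x ^ (m + 1) ≤ x ^ s := by
      rw [← rpow_natCast]; push_cast
      exact rpow_le_rpow_of_exponent_ge' hx (by linarith) hs hsm
    rw [max_eq_left (by linarith)]
    calc _ ≤ C₀ * x ^ (m + 1) := hC₀ x ⟨hx, hx2⟩
      _ ≤ max C₀ 0 * x ^ s := by gcongr; exact le_max_left C₀ 0
      _ ≤ _ := by gcongr; exact le_add_of_nonneg_right (by positivity)
  · have hmax : |max (1 - x) 0 ^ a| ≤ 1 := by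
      rw [abs_of_nonneg (by positivity)]
      exact rpow_le_one (le_max_right _ _) (max_le (by linarith) zero_le_one) ha
    have hsum : |∑ k ∈ Finset.range (m + 1), Ring.choose a k * (-x) ^ k| ≤ D * (2 * x) ^ s := by
      rw [Finset.sum_mul]
      refine (Finset.abs_sum_le_sum_abs _ _).trans (Finset.sum_le_sum fun k hk => ?_)
      rw [abs_mul, abs_pow, abs_neg, abs_of_nonneg hx]
      gcongr
      refine pow_le_two_mul_rpow hx2.le (hms.trans' ?_)
      exact_mod_cast Nat.lt_succ_iff.mp (Finset.mem_range.mp hk)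
    have hone : 1 ≤ (2 * x) ^ s := one_le_rpow (by linarith) hs
    calc _ ≤ 1 + D * (2 * x) ^ s := (abs_sub _ _).trans (add_le_add hmax hsum)
      _ ≤ (1 + D) * (2 * x) ^ s := by linarith
      _ = 2 ^ s * (1 + D) * x ^ s := by rw [mul_rpow zero_le_two hx]; ring
      _ ≤ _ := by gcongr; exact le_add_of_nonneg_left (le_max_right _ _)

/-- The Taylor polynomial `P_u` of `(u - v²)^a` in `v²`, of degree `m`. -/
noncomputable def binomialTaylor (a : ℝ) (m : ℕ) (u v : ℝ) : ℝ :=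
  u ^ a * ∑ k ∈ Finset.range (m + 1), Ring.choose a k * (-(v ^ 2 / u)) ^ k

theorem abs_max_sub_sq_rpow_sub_binomialTaylor_le {a s : ℝ} {m : ℕ} (ha : 0 ≤ a)
    (hms : (m : ℝ) ≤ s) (hsm : s ≤ m + 1) :
    ∃ C, ∀ u, 0 < u → ∀ v, 0 ≤ v →
      |max (u - v ^ 2) 0 ^ a - binomialTaylor a m u v| ≤ C * u ^ (a - s) * v ^ (2 * s) := by
  obtain ⟨C, hC⟩ := abs_max_one_sub_rpow_sub_sum_choose_le ha hms hsm
  refine ⟨C, fun u hu v hv => ?_⟩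
  have hx : 0 ≤ v ^ 2 / u := by positivity
  have hmax : max (u - v ^ 2) 0 = u * max (1 - v ^ 2 / u) 0 := by
    rw [mul_max_of_nonneg _ _ hu.le, mul_sub, mul_div_cancel₀ _ hu.ne', mul_one, mul_zero]
  have hscale : u ^ a * (v ^ 2 / u) ^ s = u ^ (a - s) * v ^ (2 * s) := by
    rw [div_rpow (sq_nonneg v) hu.le, rpow_sub hu, ← rpow_natCast, ← rpow_mul hv]
    push_cast; ring
  rw [hmax, mul_rpow hu.le (le_max_right _ _), binomialTaylor, ← mul_sub, abs_mul,
    abs_of_pos (rpow_pos_of_pos hu a), mul_assoc, ← hscale, mul_left_comm]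
  exact mul_le_mul_of_nonneg_left (hC _ hx) (by positivity)

theorem mul_binomialTaylor (ψ : ℝ → ℝ) (a : ℝ) (m : ℕ) (u v : ℝ) :
    ψ v * binomialTaylor a m u v =
      ∑ k ∈ Finset.range (m + 1), u ^ a * Ring.choose a k * (-u⁻¹) ^ k * (v ^ (2 * k) * ψ v) := by
  rw [binomialTaylor, Finset.mul_sum, Finset.mul_sum]
  refine Finset.sum_congr rfl fun k _ => ?_
  ring

theorem integrableOn_mul_binomialTaylor {ψ : ℝ → ℝ} {S : Set ℝ} (a : ℝ) {m : ℕ}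
    (hψ : ∀ k ≤ m, IntegrableOn (fun v => v ^ (2 * k) * ψ v) S) (u : ℝ) :
    IntegrableOn (fun v => ψ v * binomialTaylor a m u v) S := by
  simp_rw [mul_binomialTaylor]
  exact integrable_finsetSum _ fun k hk =>
    (hψ k (Nat.lt_succ_iff.mp (Finset.mem_range.mp hk))).const_mul _

theorem integral_mul_binomialTaylor_eq_zero {ψ : ℝ → ℝ} {S : Set ℝ} (a : ℝ) {m : ℕ}
    (hψ : ∀ k ≤ m, IntegrableOn (fun v => v ^ (2 * k) * ψ v) S)
    (hmom : ∀ k ≤ m, ∫ v in S, v ^ (2 * k) * ψ v = 0) (u : ℝ) :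
    ∫ v in S, ψ v * binomialTaylor a m u v = 0 := by
  simp_rw [mul_binomialTaylor]
  rw [integral_finsetSum _ fun k hk =>
    (hψ k (Nat.lt_succ_iff.mp (Finset.mem_range.mp hk))).const_mul _]
  refine Finset.sum_eq_zero fun k hk => ?_
  rw [integral_const_mul, hmom k (Nat.lt_succ_iff.mp (Finset.mem_range.mp hk)), mul_zero]

theorem integrableOn_rpow_mul_of_le {ψ : ℝ → ℝ} {β γ : ℝ} (hψ : IntegrableOn ψ (Ici 0))
    (hβ : IntegrableOn (fun v => v ^ β * |ψ v|) (Ici 1)) (hγ : 0 ≤ γ) (hγβ : γ ≤ β) :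
    IntegrableOn (fun v => v ^ γ * ψ v) (Ici 0) := by
  have hcont : Continuous fun v : ℝ => v ^ γ := continuous_id.rpow_const fun _ => Or.inr hγ
  rw [← Ico_union_Ici_eq_Ici zero_le_one]
  refine IntegrableOn.union ?_ ?_
  · have hψ' : IntegrableOn ψ (Ico 0 1) := hψ.mono_set Ico_subset_Ici_self
    refine hψ'.norm.mono' (hcont.aestronglyMeasurable.mul hψ'.aestronglyMeasurable) ?_
    filter_upwards [ae_restrict_mem measurableSet_Ico] with v hv
    rw [norm_mul, norm_of_nonneg (rpow_nonneg hv.1 γ)]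
    exact mul_le_of_le_one_left (norm_nonneg _) (rpow_le_one hv.1 hv.2.le hγ)
  · refine hβ.mono' (hcont.aestronglyMeasurable.mul
      (hψ.mono_set (Ici_subset_Ici.mpr zero_le_one)).aestronglyMeasurable) ?_
    filter_upwards [ae_restrict_mem measurableSet_Ici] with v (hv : 1 ≤ v)
    rw [norm_mul, norm_of_nonneg (rpow_nonneg (by linarith) γ), norm_eq_abs]
    gcongr

theorem abs_integral_mul_max_sub_sq_rpow_le_of_moments {a s : ℝ} {m : ℕ} (ha : 0 ≤ a)
    (hms : (m : ℝ) ≤ s) (hsm : s ≤ m + 1) {ψ : ℝ → ℝ} (hψ : IntegrableOn ψ (Ici 0))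
    (hpow : ∀ k ≤ m, IntegrableOn (fun v => v ^ (2 * k) * ψ v) (Ici 0))
    (hmom : ∀ k ≤ m, ∫ v in Ici 0, v ^ (2 * k) * ψ v = 0)
    (hs : IntegrableOn (fun v => v ^ (2 * s) * |ψ v|) (Ici 0)) :
    ∃ B, ∀ u, 0 < u → |∫ v in Ici 0, ψ v * max (u - v ^ 2) 0 ^ a| ≤ B * u ^ (a - s) := by
  obtain ⟨C, hC⟩ := abs_max_sub_sq_rpow_sub_binomialTaylor_le ha hms hsm
  refine ⟨C * ∫ v in Ici 0, v ^ (2 * s) * |ψ v|, fun u hu => ?_⟩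
  have hcancel : ∫ v in Ici 0, ψ v * max (u - v ^ 2) 0 ^ a =
      ∫ v in Ici 0, (ψ v * max (u - v ^ 2) 0 ^ a - ψ v * binomialTaylor a m u v) := by
    rw [integral_sub (integrable_mul_max_sub_sq_rpow hψ ha hu.le)
      (integrableOn_mul_binomialTaylor a hpow u),
      integral_mul_binomialTaylor_eq_zero a hpow hmom u, sub_zero]
  rw [hcancel, mul_right_comm, ← integral_const_mul]
  refine norm_integral_le_of_norm_le (G := ℝ) (hs.const_mul _) ?_
  filter_upwards [ae_restrict_mem measurableSet_Ici] with v (hv : 0 ≤ v)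
  rw [← mul_sub, norm_mul, norm_eq_abs, norm_eq_abs]
  calc |ψ v| * |max (u - v ^ 2) 0 ^ a - binomialTaylor a m u v|
      ≤ |ψ v| * (C * u ^ (a - s) * v ^ (2 * s)) := by gcongr; exact hC u hu v hv
    _ = _ := by ring

theorem exists_le_mul_rpow_div_add_one_rpow {f : ℝ → ℝ} {a s A B : ℝ} (hs : 0 ≤ s)
    (hA : ∀ u, 0 < u → f u ≤ A * u ^ a) (hB : ∀ u, 0 < u → f u ≤ B * u ^ (a - s)) :
    ∃ C, 0 < C ∧ ∀ u, 0 < u → f u ≤ C * u ^ a / (u + 1) ^ s := by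
  refine ⟨2 ^ s * (|A| + |B| + 1), by positivity, fun u hu => ?_⟩
  rw [le_div_iff₀ (by positivity)]
  rcases le_or_gt u 1 with hu1 | hu1
  · have h2 : (u + 1) ^ s ≤ 2 ^ s := rpow_le_rpow (by linarith) (by linarith) hs
    calc f u * (u + 1) ^ s ≤ |A| * u ^ a * (u + 1) ^ s := by
          gcongr
          exact (hA u hu).trans (by gcongr; exact le_abs_self A)
      _ ≤ |A| * u ^ a * 2 ^ s := by gcongr
      _ = 2 ^ s * |A| * u ^ a := by ring
      _ ≤ _ := by gcongr; linarith [abs_nonneg B]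
  · have h2 : (u + 1) ^ s ≤ 2 ^ s * u ^ s := by
      rw [← mul_rpow zero_le_two hu.le]
      exact rpow_le_rpow (by linarith) (by linarith) hs
    calc f u * (u + 1) ^ s ≤ |B| * u ^ (a - s) * (2 ^ s * u ^ s) := by
          gcongr
          · exact (hB u hu).trans (by gcongr; exact le_abs_self B)
      _ = 2 ^ s * |B| * u ^ a := by rw [rpow_sub hu]; field_simp
      _ ≤ _ := by gcongr; linarith [abs_nonneg A]

theorem stmt_16 (lam : ℝ) (hlam : 0 < lam) (ψ : ℝ → ℝ)
    (hψ : IntegrableOn ψ (Set.Ici 0))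
    (β : ℝ) (hβ : 2 * lam < β)
    (hint1 : IntegrableOn (fun s => s ^ β * |ψ s|) (Set.Ici 1))
    (hmom : ∀ j : ℕ, Even j → (j : ℝ) ≤ 2 * ⌊lam⌋ →
      ∫ s in Set.Ici (0:ℝ), s ^ (j : ℝ) * ψ s = 0) :
    ∃ ρ C : ℝ, 0 < ρ ∧ 0 < C ∧ ∀ u : ℝ, 0 < u →
      |fracB (lam + 1) ψ u| ≤ C * u ^ lam / (u + 1) ^ (lam + ρ) := by
  set m := ⌊lam⌋₊
  have hm : (m : ℝ) ≤ lam := Nat.floor_le hlam.le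
  set s := min ((m : ℝ) + 1) (β / 2)
  have hs : lam < s := lt_min (Nat.lt_floor_add_one lam) (by linarith)
  have h2k : ∀ k ≤ m, ((2 * k : ℕ) : ℝ) ≤ 2 * m := fun k hk => by push_cast; gcongr
  have hpow : ∀ k ≤ m, IntegrableOn (fun v => v ^ (2 * k) * ψ v) (Ici 0) := fun k hk => by
    simpa only [rpow_natCast] using
      integrableOn_rpow_mul_of_le hψ hint1 (Nat.cast_nonneg _) (by linarith [h2k k hk])
  have hmoments : ∀ k ≤ m, ∫ v in Ici 0, v ^ (2 * k) * ψ v = 0 := fun k hk => by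
    simpa only [rpow_natCast] using hmom (2 * k) (even_two_mul k)
      (by rw [← Int.natCast_floor_eq_floor hlam.le, Int.cast_natCast]; exact h2k k hk)
  have hweight : IntegrableOn (fun v => v ^ (2 * s) * |ψ v|) (Ici 0) :=
    integrableOn_rpow_mul_of_le hψ.abs (by simpa only [abs_abs] using hint1) (by linarith)
      (by linarith [min_le_right ((m : ℝ) + 1) (β / 2)])
  obtain ⟨B, hB⟩ := abs_integral_mul_max_sub_sq_rpow_le_of_moments hlam.le (hm.trans hs.le)
    (min_le_left _ _) hψ hpow hmoments hweight
  obtain ⟨C, hC, hbound⟩ := exists_le_mul_rpow_div_add_one_rpow (by linarith)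
    (fun u hu => abs_integral_mul_max_sub_sq_rpow_le hψ hlam.le hu.le) hB
  have hΓ : 0 < 2 / Gamma (lam + 1) := div_pos two_pos (Gamma_pos_of_pos (by linarith))
  refine ⟨s - lam, 2 / Gamma (lam + 1) * C, by linarith, by positivity, fun u hu => ?_⟩
  rw [fracB_add_one_eq hlam ψ hu.le, add_sub_cancel, abs_mul, abs_of_pos hΓ]
  calc _ ≤ 2 / Gamma (lam + 1) * (C * u ^ lam / (u + 1) ^ s) := by gcongr; exact hbound u hu
    _ = _ := by ring
end

section
/- Let $\lambda$ be a positive integer and $n$ an even nonnegative integer. Then with $b_n=(-1)^{n/2}\frac{\Gamma(\lambda+1/2)}{\Gamma(1/2)}\frac{\Gamma((n+1)/2)}{\Gamma(\lambda+(n+1)/2)}$ and $\mu_n=n(n+2\lambda)$, $$\frac{\pi}{\Gamma(\lambda+1/2)^2}\cdot 4^{-\lambda}\prod_{j=1}^{\lambda}\big[\mu_n+(2j-1)(2\lambda-2j+1)\big]\cdot b_n^2=1.$$ -/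
/-!
Each factor of the product splits as `(n + 2j - 1)(n + 2λ - 2j + 1)`, and `j ↦ λ + 1 - j` exchanges
the two halves, so the product is `(∏_{i<λ} (n + 2i + 1))² = 4^λ ((n+1)/2)_λ²`, with `(a)_λ` the
rising factorial. Since `Γ(λ + (n+1)/2) = Γ((n+1)/2) ((n+1)/2)_λ` and `Γ(1/2) = √π`,
`b_n² = Γ(λ+1/2)² / (π ((n+1)/2)_λ²)`, and everything cancels.
-/

open MeasureTheory Real Finset

theorem ascPochhammer_eval_eq_prod_range {R : Type*} [CommSemiring R] (n : ℕ) (r : R) :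
    (ascPochhammer R n).eval r = ∏ i ∈ range n, (r + i) := by
  induction n with
  | zero => simp
  | succ n ih => rw [ascPochhammer_succ_eval, ih, prod_range_succ]

theorem Real.Gamma_nat_add_eq_mul_ascPochhammer {x : ℝ} {m : ℕ} (hx : ∀ k < m, x + k ≠ 0) :
    Gamma (m + x) = Gamma x * (ascPochhammer ℝ m).eval x := by
  induction m with
  | zero => simp
  | succ m ih =>
    rw [Nat.cast_succ, add_right_comm, Gamma_add_one (by rw [add_comm]; exact hx m m.lt_succ_self),
      ih fun k hk => hx k (hk.trans m.lt_succ_self), ascPochhammer_succ_eval]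
    ring

theorem prod_Icc_eq_four_pow_mul_ascPochhammer_sq (x : ℝ) (lam : ℕ) :
    ∏ j ∈ Icc 1 lam, (x * (x + 2 * lam) + (2 * (j : ℝ) - 1) * (2 * (lam : ℝ) - 2 * j + 1)) =
      4 ^ lam * ((ascPochhammer ℝ lam).eval ((x + 1) / 2)) ^ 2 := by
  have hfactor : ∀ k ∈ range lam,
      x * (x + 2 * lam) + (2 * ((1 + k : ℕ) : ℝ) - 1) * (2 * (lam : ℝ) - 2 * (1 + k : ℕ) + 1) =
        (x + 2 * k + 1) * (x + 2 * ((lam - 1 - k : ℕ) : ℝ) + 1) := by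
    intro k hk
    rw [mem_range] at hk
    rw [Nat.cast_sub (by omega), Nat.cast_sub (by omega)]
    push_cast
    ring
  have hodd : 4 ^ lam * ((ascPochhammer ℝ lam).eval ((x + 1) / 2)) ^ 2 =
      (∏ i ∈ range lam, (x + 2 * i + 1)) ^ 2 := by
    rw [ascPochhammer_eval_eq_prod_range, show (4 : ℝ) = 2 ^ 2 by norm_num, ← pow_mul, pow_mul',
      ← mul_pow, show (2 : ℝ) ^ lam = ∏ _i ∈ range lam, 2 by simp, ← prod_mul_distrib]
    exact congrArg (· ^ 2) (prod_congr rfl fun i _ => by ring)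
  rw [hodd, ← Ico_add_one_right_eq_Icc, prod_Ico_eq_prod_range, Nat.add_sub_cancel,
    prod_congr rfl hfactor, prod_mul_distrib, prod_range_reflect (fun i => x + 2 * (i : ℝ) + 1), sq]

theorem stmt_18_general (lam : ℕ) (n : ℕ)
    (b : ℝ)
    (hb : b = (-1 : ℝ) ^ (n / 2) * (Real.Gamma ((lam : ℝ) + 1/2) / Real.Gamma (1/2)) *
      (Real.Gamma (((n : ℝ) + 1) / 2) / Real.Gamma ((lam : ℝ) + ((n : ℝ) + 1) / 2))) :
    (π / Real.Gamma ((lam : ℝ) + 1/2) ^ 2) *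
      ((4 : ℝ) ^ (-(lam : ℤ)) *
        ∏ j ∈ Finset.Icc 1 lam,
          ((n : ℝ) * ((n : ℝ) + 2 * lam) + (2 * (j : ℝ) - 1) * (2 * (lam : ℝ) - 2 * j + 1))) *
      b ^ 2 = 1 := by
  have hy : (0 : ℝ) < ((n : ℝ) + 1) / 2 := by positivity
  have hΓy : Gamma (((n : ℝ) + 1) / 2) ≠ 0 := (Gamma_pos_of_pos hy).ne'
  have hΓlam : Gamma ((lam : ℝ) + 1 / 2) ≠ 0 := (Gamma_pos_of_pos (by positivity)).ne'
  have hpoch : (ascPochhammer ℝ lam).eval (((n : ℝ) + 1) / 2) ≠ 0 :=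
    (ascPochhammer_pos lam _ hy).ne'
  have hsign : ((-1 : ℝ) ^ (n / 2)) ^ 2 = 1 := by rw [← pow_mul, pow_mul', neg_one_sq, one_pow]
  rw [prod_Icc_eq_four_pow_mul_ascPochhammer_sq, hb,
    Gamma_nat_add_eq_mul_ascPochhammer (x := ((n : ℝ) + 1) / 2) fun k _ => by positivity,
    Gamma_one_half_eq, zpow_neg, zpow_natCast]
  field_simp
  rw [hsign, sq_sqrt pi_pos.le, mul_one]

theorem stmt_18 (lam : ℕ) (hlam : 0 < lam) (n : ℕ) (hn : Even n)
    (b : ℝ)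
    (hb : b = (-1 : ℝ) ^ (n / 2) * (Real.Gamma ((lam : ℝ) + 1/2) / Real.Gamma (1/2)) *
      (Real.Gamma (((n : ℝ) + 1) / 2) / Real.Gamma ((lam : ℝ) + ((n : ℝ) + 1) / 2))) :
    (π / Real.Gamma ((lam : ℝ) + 1/2) ^ 2) *
      ((4 : ℝ) ^ (-(lam : ℤ)) *
        ∏ j ∈ Finset.Icc 1 lam,
          ((n : ℝ) * ((n : ℝ) + 2 * lam) + (2 * (j : ℝ) - 1) * (2 * (lam : ℝ) - 2 * j + 1))) *
      b ^ 2 = 1 :=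
  stmt_18_general lam n b hb
end
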